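/- arXiv:2509.24990 — 4 statements merged into one kernel-verified Lean document; each statement's English description precedes it below -/
import Mathlib

section
/- Let h and ε be positive real numbers, let t ≥ 0, and let γ be a real number with γ ≥ 4/(h·ε) and γ ≥ t/h. Suppose r, x, y, c, T are real numbers satisfying: x > 0; x² − 2·h·r·y ≥ 0; r ≤ x/(h·ε); and c ≤ r + x/(h·ε) − T. Then 2·y·(2·y − 3·(γ·h − t)·r) − 6·x·(c − (γ·x − T)) ≥ 0. -/
/-- Numerical core of Theorem 3.3: reduction of the Γ-generalized BMT inequality
`Q^Γ_{0,0}(E) ≥ 0` to the strengthened Bogomolov–Gieseker inequality `BG₃(ε)`. -/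
theorem stmt_0 (h ε t γ r x y c T : ℝ)
    (hh : 0 < h) (hε : 0 < ε) (ht : 0 ≤ t)
    (hγ1 : γ ≥ 4 / (h * ε)) (hγ2 : γ ≥ t / h)
    (hx : 0 < x)
    (hBG : x ^ 2 - 2 * h * r * y ≥ 0)
    (hr : r ≤ x / (h * ε))
    (hc : c ≤ r + x / (h * ε) - T) :
    2 * y * (2 * y - 3 * (γ * h - t) * r) - 6 * x * (c - (γ * x - T)) ≥ 0 := by
  have hhe : (0:ℝ) < h * ε := mul_pos hh hε
  have h1 : 4 ≤ γ * (h * ε) := (div_le_iff₀ hhe).mp hγ1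
  have h2 : t ≤ γ * h := (div_le_iff₀ hh).mp hγ2
  have h3 : r * (h * ε) ≤ x := (le_div_iff₀ hhe).mp hr
  have h4 : (c - r + T) * (h * ε) ≤ x := by
    have : c - r + T ≤ x / (h * ε) := by linarith
    exact (le_div_iff₀ hhe).mp this
  have hA : (γ * h - t) * (x ^ 2 - 2 * h * r * y) ≥ 0 :=
    mul_nonneg (by linarith) hBG
  have hB : x * (x - r * (h * ε)) ≥ 0 := mul_nonneg hx.le (by linarith)
  have hC : x ^ 2 * (γ * (h * ε) - 4) ≥ 0 := mul_nonneg (sq_nonneg x) (by linarith)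
  have hD : x * (x - (c - r + T) * (h * ε)) ≥ 0 := mul_nonneg hx.le (by linarith)
  have hE : (0:ℝ) < h * (h * ε) := mul_pos hh hhe
  nlinarith [mul_nonneg hA hε.le, mul_nonneg (mul_nonneg (sq_nonneg y) hh.le) hhe.le,
    mul_nonneg (mul_nonneg hB hh.le) hh.le, mul_nonneg hC hh.le,
    mul_nonneg (mul_nonneg hD hh.le) hh.le,
    mul_nonneg (mul_nonneg (mul_nonneg ht (sq_nonneg x)) hh.le) hε.le, hE,
    mul_nonneg hB hh.le, mul_nonneg hD hh.le]
end

section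
/- Let ε be a real number with 0 < ε ≤ 1/3. Then for every b with 0 < b ≤ 1 and every x with 0 ≤ x ≤ b, one has b·f_ε(x) ≤ x·f_ε(b). Equivalently, the line segment joining the origin (0,0) to the point (b, f_ε(b)) lies on or above the graph of f_ε over the interval [0, b]. -/
/-- The function `f_ε` from the modified Bogomolov–Gieseker statement
`\widetilde{BG}ₙ(ε)`. -/
noncomputable def fBG (ε x : ℝ) : ℝ :=
  if |x| ≤ ε then -|x| / 2
  else if |x| ≤ 2 * ε / (1 - ε) then ((1 + ε) * |x| - 2 * ε) / (2 * (1 - ε))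
  else |x| ^ 2 / 2

/-- Chord property: for `0 < ε ≤ 1/3`, the segment from the origin to `(b, f_ε(b))`
lies on or above the graph of `f_ε` over `[0, b]`, for any `0 < b ≤ 1`. -/
theorem stmt_2 (ε : ℝ) (hε0 : 0 < ε) (hε1 : ε ≤ 1 / 3)
    (b : ℝ) (hb0 : 0 < b) (hb1 : b ≤ 1) (x : ℝ) (hx0 : 0 ≤ x) (hxb : x ≤ b) :
    b * fBG ε x ≤ x * fBG ε b := by
  have hε' : (0:ℝ) < 1 - ε := by linarith
  have hc : (0:ℝ) < 2 * (1 - ε) := by linarith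
  have hax : |x| = x := abs_of_nonneg hx0
  have hab : |b| = b := abs_of_nonneg hb0.le
  unfold fBG
  rw [hax, hab]
  split_ifs with h1 h2 h3 h4 h5 h6 h7 h8
  · nlinarith
  · -- x ≤ ε < b ≤ m
    push_neg at h2
    rw [← mul_div_assoc, ← mul_div_assoc, le_div_iff₀ hc]
    nlinarith [mul_nonneg hx0 (by linarith : (0:ℝ) ≤ b - ε)]
  · -- x ≤ ε, b > m
    have : 0 ≤ x * b * (b + 1) := by positivity
    nlinarith
  · -- ε < x, b ≤ ε : impossible
    push_neg at h1; linarith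
  · -- both in middle piece
    rw [← mul_div_assoc, ← mul_div_assoc, div_le_div_iff₀ hc hc]
    nlinarith [mul_nonneg hε0.le (by linarith : (0:ℝ) ≤ b - x)]
  · -- ε < x ≤ m, b > m
    push_neg at h6
    have hxm : x * (1 - ε) ≤ 2 * ε := (le_div_iff₀ hε').mp h4
    have hbm : 2 * ε < b * (1 - ε) := (div_lt_iff₀ hε').mp h6
    push_neg at h1
    rw [← mul_div_assoc, div_le_iff₀ hc]
    -- b * ((1+ε)x - 2ε) ≤ x * (b^2/2) * (2(1-ε))
    nlinarith [mul_nonneg hx0 (by linarith : (0:ℝ) ≤ b * (1 - ε) - 2 * ε),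
      mul_nonneg (by linarith : (0:ℝ) ≤ 2 * ε - x * (1 - ε)) (by linarith : (0:ℝ) ≤ b * (1 - ε) - 2 * ε)]
  · -- x > m, b ≤ ε : impossible
    push_neg at h1; linarith
  · -- x > m, b ≤ m : impossible since x ≤ b
    push_neg at h4; linarith
  · -- both top
    nlinarith [mul_nonneg (mul_nonneg hx0 hb0.le) (by linarith : (0:ℝ) ≤ b - x)]
end

section
/- Let ε be a real number with 0 < ε ≤ 1/3. Then for every b with 0 ≤ b < 1 and every x with b ≤ x ≤ 1, one has (1−b)·f_ε(x) ≤ (1−x)·f_ε(b) + (x−b)·(1/2). Equivalently, the line segment joining the point (b, f_ε(b)) to the point (1, 1/2) lies on or above the graph of f_ε over the interval [b, 1]. -/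
/-- Chord property: for `0 < ε ≤ 1/3`, the segment joining `(b, f_ε(b))` to
`(1, 1/2)` lies on or above the graph of `f_ε` over `[b, 1]`, for any `0 ≤ b < 1`. -/
theorem stmt_3 (ε : ℝ) (hε0 : 0 < ε) (hε1 : ε ≤ 1 / 3)
    (b : ℝ) (hb0 : 0 ≤ b) (hb1 : b < 1) (x : ℝ) (hxb : b ≤ x) (hx1 : x ≤ 1) :
    (1 - b) * fBG ε x ≤ (1 - x) * fBG ε b + (x - b) * (1 / 2) := by
  have h1ε : (0:ℝ) < 1 - ε := by linarith
  have h1ε' : (1:ℝ) - ε ≠ 0 := ne_of_gt h1ε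
  have hx0 : 0 ≤ x := le_trans hb0 hxb
  unfold fBG
  rw [abs_of_nonneg hx0, abs_of_nonneg hb0]
  by_cases hxε : x ≤ ε
  · rw [if_pos hxε, if_pos (le_trans hxb hxε)]
    nlinarith
  · rw [if_neg hxε]
    push_neg at hxε
    by_cases hx2 : x ≤ 2 * ε / (1 - ε)
    · rw [if_pos hx2]
      by_cases hbε : b ≤ ε
      · rw [if_pos hbε, ← sub_nonneg]
        have key : (1 - x) * (-b / 2) + (x - b) * (1 / 2)
            - (1 - b) * (((1 + ε) * x - 2 * ε) / (2 * (1 - ε)))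
            = (2 * (1 - x) * (ε - b)) / (2 * (1 - ε)) := by
          field_simp
          ring
        rw [key]
        apply div_nonneg _ (by linarith)
        nlinarith
      · push_neg at hbε
        rw [if_neg (not_le.2 hbε), if_pos (le_trans hxb hx2), ← sub_nonneg]
        have key : (1 - x) * (((1 + ε) * b - 2 * ε) / (2 * (1 - ε))) + (x - b) * (1 / 2)
            - (1 - b) * (((1 + ε) * x - 2 * ε) / (2 * (1 - ε))) = 0 := by
          field_simp
          ring
        rw [key]
    · rw [if_neg hx2]
      push_neg at hx2
      have hx2' : 2 * ε < x * (1 - ε) := (div_lt_iff₀ h1ε).mp hx2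
      by_cases hbε : b ≤ ε
      · rw [if_pos hbε]
        nlinarith [mul_nonneg (sub_nonneg.2 hx1)
          (by nlinarith : (0:ℝ) ≤ x - b * (x + 2))]
      · push_neg at hbε
        by_cases hb2 : b ≤ 2 * ε / (1 - ε)
        · rw [if_neg (not_le.2 hbε), if_pos hb2, ← sub_nonneg]
          have key : (1 - x) * (((1 + ε) * b - 2 * ε) / (2 * (1 - ε))) + (x - b) * (1 / 2)
              - (1 - b) * (x ^ 2 / 2)
              = ((1 - b) * ((1 - x) * (x * (1 - ε) - 2 * ε))) / (2 * (1 - ε)) := by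
            field_simp
            ring
          rw [key]
          apply div_nonneg _ (by linarith)
          have := mul_nonneg (sub_nonneg.2 hx1) (by linarith : (0:ℝ) ≤ x * (1 - ε) - 2 * ε)
          nlinarith
        · rw [if_neg (not_le.2 hbε), if_neg hb2]
          nlinarith [mul_nonneg (mul_nonneg (sub_nonneg.2 hxb) (sub_nonneg.2 hx1))
            (sub_nonneg.2 hb1.le)]
end

section
/- Let c ≥ 0 be a real number, let k ≥ 1, and let v₁, …, v_k ∈ ℝ² with vᵢ = (xᵢ, yᵢ) and yᵢ > 0 for all i. Set P = (x_P, y_P) := v₁ + ⋯ + v_k, and let Q = (x_Q, y_Q) be a point with 0 < y_Q < y_P such that (x_P − x_Q)/(y_P − y_Q) ≤ xᵢ/yᵢ ≤ x_Q/y_Q for every i. Then Σᵢ √(xᵢ² + c·yᵢ²) ≤ √(x_Q² + c·y_Q²) + √((x_P − x_Q)² + c·(y_P − y_Q)²). -/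
/-! Write `Q = (p, q)` and `P - Q = (r, t)`. The slope conditions put every `vᵢ` in the cone
spanned by `Q` and `P - Q`, so `vᵢ = aᵢ Q + bᵢ (P - Q)` with `aᵢ, bᵢ ≥ 0`, and comparing with
`∑ vᵢ = P` gives `∑ aᵢ = ∑ bᵢ = 1` (if `Q` and `P - Q` are parallel, take `aᵢ = bᵢ = yᵢ / y_P`).
Since `√(x² + c y²)` is the modulus of `x + i √c y`, the triangle inequality finishes the proof. -/

open Finset

theorem sum_norm_le_norm_add_norm_of_eq_smul_add_smul {ι E : Type*} [SeminormedAddCommGroup E]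
    [NormedSpace ℝ E] {s : Finset ι} {v : ι → E} {u w : E} {a b : ι → ℝ}
    (ha : ∀ i ∈ s, 0 ≤ a i) (hb : ∀ i ∈ s, 0 ≤ b i) (hv : ∀ i ∈ s, v i = a i • u + b i • w)
    (ha_sum : ∑ i ∈ s, a i = 1) (hb_sum : ∑ i ∈ s, b i = 1) :
    ∑ i ∈ s, ‖v i‖ ≤ ‖u‖ + ‖w‖ :=
  calc ∑ i ∈ s, ‖v i‖ ≤ ∑ i ∈ s, (a i * ‖u‖ + b i * ‖w‖) := by
        refine sum_le_sum fun i hi => ?_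
        rw [hv i hi, ← norm_smul_of_nonneg (ha i hi), ← norm_smul_of_nonneg (hb i hi)]
        exact norm_add_le _ _
    _ = ‖u‖ + ‖w‖ := by rw [sum_add_distrib, ← sum_mul, ← sum_mul, ha_sum, hb_sum, one_mul, one_mul]

section ConeCoefficients

variable {ι : Type*} {s : Finset ι} {x y : ι → ℝ} {p q r t : ℝ}

theorem exists_cone_coeffs_of_det_pos (hD : 0 < p * t - r * q)
    (hlow : ∀ i ∈ s, r * y i ≤ x i * t) (hupp : ∀ i ∈ s, x i * q ≤ p * y i)
    (hx_sum : ∑ i ∈ s, x i = p + r) (hy_sum : ∑ i ∈ s, y i = q + t) :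
    ∃ a b : ι → ℝ, (∀ i ∈ s, 0 ≤ a i ∧ 0 ≤ b i ∧ x i = a i * p + b i * r ∧
      y i = a i * q + b i * t) ∧ ∑ i ∈ s, a i = 1 ∧ ∑ i ∈ s, b i = 1 := by
  refine ⟨fun i => (x i * t - r * y i) / (p * t - r * q),
    fun i => (p * y i - x i * q) / (p * t - r * q), fun i hi => ⟨?_, ?_, ?_, ?_⟩, ?_, ?_⟩
  · exact div_nonneg (sub_nonneg.2 (hlow i hi)) hD.le
  · exact div_nonneg (sub_nonneg.2 (hupp i hi)) hD.le
  · rw [div_mul_eq_mul_div, div_mul_eq_mul_div, ← add_div, eq_div_iff hD.ne']; ring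
  · rw [div_mul_eq_mul_div, div_mul_eq_mul_div, ← add_div, eq_div_iff hD.ne']; ring
  · rw [← sum_div, div_eq_one_iff_eq hD.ne', sum_sub_distrib, ← sum_mul, ← mul_sum, hx_sum, hy_sum]
    ring
  · rw [← sum_div, div_eq_one_iff_eq hD.ne', sum_sub_distrib, ← sum_mul, ← mul_sum, hx_sum, hy_sum]
    ring

theorem exists_cone_coeffs_of_det_eq_zero (hq : 0 < q) (ht : 0 < t) (hD : p * t = r * q)
    (hy : ∀ i ∈ s, 0 ≤ y i)
    (hlow : ∀ i ∈ s, r * y i ≤ x i * t) (hupp : ∀ i ∈ s, x i * q ≤ p * y i)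
    (hy_sum : ∑ i ∈ s, y i = q + t) :
    ∃ a b : ι → ℝ, (∀ i ∈ s, 0 ≤ a i ∧ 0 ≤ b i ∧ x i = a i * p + b i * r ∧
      y i = a i * q + b i * t) ∧ ∑ i ∈ s, a i = 1 ∧ ∑ i ∈ s, b i = 1 := by
  have hqt : 0 < q + t := add_pos hq ht
  have hsum : ∑ i ∈ s, y i / (q + t) = 1 := by rw [← sum_div, hy_sum, div_self hqt.ne']
  refine ⟨fun i => y i / (q + t), fun i => y i / (q + t), fun i hi => ⟨?_, ?_, ?_, ?_⟩, hsum, hsum⟩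
  · exact div_nonneg (hy i hi) hqt.le
  · exact div_nonneg (hy i hi) hqt.le
  · -- `r y q ≤ x t q ≤ p y t = r y q`, so both cross inequalities are equalities
    have hpt : p * y i * t = r * y i * q := by linear_combination y i * hD
    have hl := mul_le_mul_of_nonneg_right (hlow i hi) hq.le
    have hu := mul_le_mul_of_nonneg_right (hupp i hi) ht.le
    have hxt : x i * t = r * y i := mul_right_cancel₀ hq.ne' (by linarith)
    have hxq : x i * q = p * y i := mul_right_cancel₀ ht.ne' (by linarith)
    rw [← mul_add, div_mul_eq_mul_div, eq_div_iff hqt.ne']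
    linear_combination hxq + hxt
  · rw [← mul_add, div_mul_cancel₀ _ hqt.ne']

theorem exists_cone_coeffs (hq : 0 < q) (ht : 0 < t) (hy : ∀ i ∈ s, 0 ≤ y i)
    (hlow : ∀ i ∈ s, r * y i ≤ x i * t) (hupp : ∀ i ∈ s, x i * q ≤ p * y i)
    (hx_sum : ∑ i ∈ s, x i = p + r) (hy_sum : ∑ i ∈ s, y i = q + t) :
    ∃ a b : ι → ℝ, (∀ i ∈ s, 0 ≤ a i ∧ 0 ≤ b i ∧ x i = a i * p + b i * r ∧
      y i = a i * q + b i * t) ∧ ∑ i ∈ s, a i = 1 ∧ ∑ i ∈ s, b i = 1 := by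
  have hsum_le : r * (q + t) ≤ (p + r) * t := by
    rw [← hx_sum, ← hy_sum, mul_sum, sum_mul]
    exact sum_le_sum hlow
  rcases (sub_nonneg.2 (show r * q ≤ p * t by linarith)).eq_or_lt with hD | hD
  · exact exists_cone_coeffs_of_det_eq_zero hq ht (by linarith) hy hlow hupp hy_sum
  · exact exists_cone_coeffs_of_det_pos hD hlow hupp hx_sum hy_sum

end ConeCoefficients

theorem Real.sqrt_sq_add_mul_sq_eq_norm {c : ℝ} (hc : 0 ≤ c) (u v : ℝ) :
    √(u ^ 2 + c * v ^ 2) = ‖(⟨u, √c * v⟩ : ℂ)‖ := by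
  rw [Complex.norm_def, Complex.normSq_mk, mul_mul_mul_comm, Real.mul_self_sqrt hc]
  ring_nf

theorem stmt_9_general (c : ℝ) (hc : 0 ≤ c) (k : ℕ)
    (x y : Fin k → ℝ) (hy : ∀ i, 0 < y i)
    (xP yP : ℝ) (hxP : xP = ∑ i, x i) (hyP : yP = ∑ i, y i)
    (xQ yQ : ℝ) (hyQ0 : 0 < yQ) (hyQP : yQ < yP)
    (hslope : ∀ i, (xP - xQ) / (yP - yQ) ≤ x i / y i ∧ x i / y i ≤ xQ / yQ) :
    ∑ i, Real.sqrt ((x i) ^ 2 + c * (y i) ^ 2) ≤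
      Real.sqrt (xQ ^ 2 + c * yQ ^ 2) +
        Real.sqrt ((xP - xQ) ^ 2 + c * (yP - yQ) ^ 2) := by
  have ht : 0 < yP - yQ := sub_pos.2 hyQP
  obtain ⟨a, b, hab, ha_sum, hb_sum⟩ := exists_cone_coeffs (s := univ) (p := xQ) (r := xP - xQ)
    hyQ0 ht (fun i _ => (hy i).le)
    (fun i _ => (div_le_div_iff₀ ht (hy i)).1 (hslope i).1)
    (fun i _ => (div_le_div_iff₀ (hy i) hyQ0).1 (hslope i).2)
    (by rw [← hxP]; ring) (by rw [← hyP]; ring)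
  simp only [Real.sqrt_sq_add_mul_sq_eq_norm hc]
  refine sum_norm_le_norm_add_norm_of_eq_smul_add_smul (fun i hi => (hab i hi).1)
    (fun i hi => (hab i hi).2.1) (fun i hi => ?_) ha_sum hb_sum
  obtain ⟨-, -, hx, hy⟩ := hab i hi
  apply Complex.ext
  · simp [hx]
  · simp only [hy, Complex.real_smul, Complex.add_im, Complex.mul_im, Complex.ofReal_re,
      Complex.ofReal_im, zero_mul, add_zero]
    ring

/-- Weighted-norm chain bound from the proof of Proposition 4.13: vectors
`(xᵢ, yᵢ)` with `yᵢ > 0` summing to `P`, whose slopes all lie between the slopes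
of `QP` and `OQ`, have total weighted length at most the sum of the weighted
lengths of `OQ` and `QP`. -/
theorem stmt_9 (c : ℝ) (hc : 0 ≤ c) (k : ℕ) (hk : 1 ≤ k)
    (x y : Fin k → ℝ) (hy : ∀ i, 0 < y i)
    (xP yP : ℝ) (hxP : xP = ∑ i, x i) (hyP : yP = ∑ i, y i)
    (xQ yQ : ℝ) (hyQ0 : 0 < yQ) (hyQP : yQ < yP)
    (hslope : ∀ i, (xP - xQ) / (yP - yQ) ≤ x i / y i ∧ x i / y i ≤ xQ / yQ) :
    ∑ i, Real.sqrt ((x i) ^ 2 + c * (y i) ^ 2) ≤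
      Real.sqrt (xQ ^ 2 + c * yQ ^ 2) +
        Real.sqrt ((xP - xQ) ^ 2 + c * (yP - yQ) ^ 2) :=
  stmt_9_general c hc k x y hy xP yP hxP hyP xQ yQ hyQ0 hyQP hslope
end
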